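/- (Main theorem, non-convex case.) Suppose every device loss f_{i,j} is differentiable with L_f-Lipschitz gradient (not necessarily convex), and suppose γ > 2λ > 4L_f ≥ 0 (so that the server objective φ is differentiable with γ-Lipschitz gradient). Let the step sizes satisfy 0 < α_{i,j} ≤ 1/λ, 0 < η_i ≤ 1/(λ + γ), and 0 < β ≤ 1/(4γ), and let x* be a global minimizer of φ with φ(x⁰) > φ(x*). Then for every T ≥ 1 there exist numbers of inner iterations K, L ∈ ℕ such that the PerMFL iterates satisfy (1/T) ∑_{t=0}^{T−1} ‖∇φ(x^t)‖² ≤ 4 ( φ(x⁰) − φ(x*) ) / (βT); in particular, a point x^{t̃} chosen uniformly at random from {x⁰, …, x^{T−1}} satisfies E[‖∇φ(x^{t̃})‖²] ≤ 4 ( φ(x⁰) − φ(x*) ) / (βT). -/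

import Mathlib

noncomputable section

/-- Moreau envelope of `g : E → ℝ` with parameter `σ`. -/
def moreauEnv {E : Type*} [NormedAddCommGroup E] (g : E → ℝ) (σ : ℝ) (x : E) : ℝ :=
  ⨅ u : E, (g u + σ / 2 * ‖u - x‖ ^ 2)

variable {E : Type*} [NormedAddCommGroup E] [InnerProductSpace ℝ E] [FiniteDimensional ℝ E]

/-- PerMFL client-level (device) iterates: `θ⁰ = w`,
`θ^{l+1} = θˡ − α(∇g(θˡ) + λ(θˡ − w))`. -/
def clientSeq (g : E → ℝ) (α lam : ℝ) (w : E) : ℕ → E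
  | 0 => w
  | l + 1 =>
      clientSeq g α lam w l
        - α • (gradient g (clientSeq g α lam w l)
                + lam • (clientSeq g α lam w l - w))

/-- PerMFL team-level iterates for a team with `N` devices: `w⁰ = xt`,
`w^{k+1} = (1 − η(λ+γ))wᵏ + ηγ·xt + (λη/N)∑ⱼ θⱼ^{k,L}`. -/
def teamSeq {N : ℕ} (f : Fin N → E → ℝ) (α : Fin N → ℝ) (lam gam η : ℝ)
    (L : ℕ) (xt : E) : ℕ → E
  | 0 => xt
  | k + 1 =>
      (1 - η * (lam + gam)) • teamSeq f α lam gam η L xt k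
        + (η * gam) • xt
        + ((lam * η) / (N : ℝ)) •
            ∑ j : Fin N, clientSeq (f j) (α j) lam (teamSeq f α lam gam η L xt k) L

/-- PerMFL server-level (global) iterates: `x⁰ = x0`,
`x^{t+1} = (1 − βγ)xᵗ + (βγ/M)∑ᵢ wᵢ^{t,K}`. -/
def serverSeq {M : ℕ} {N : Fin M → ℕ} (f : (i : Fin M) → Fin (N i) → E → ℝ)
    (α : (i : Fin M) → Fin (N i) → ℝ) (η : Fin M → ℝ) (lam gam β : ℝ)
    (K L : ℕ) (x0 : E) : ℕ → E
  | 0 => x0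
  | t + 1 =>
      (1 - β * gam) • serverSeq f α η lam gam β K L x0 t
        + ((β * gam) / (M : ℝ)) •
            ∑ i : Fin M,
              teamSeq (f i) (α i) lam gam (η i) L (serverSeq f α η lam gam β K L x0 t) K


/-!
For `2 L_f < λ < γ` every inner subproblem is strongly convex. The gradient of the device
objective `f + λ/2 ‖· - w‖²` and that of the team objective `F_i + γ/2 ‖· - x‖²` both have the form
`c • u - A u` with `A` Lipschitz with constant below `c`, so their minimizers (the proximal points)
exist, are Lipschitz in the anchor, and are the limits of the device and team updates, which are
relaxed fixed-point steps for `A u = c • u`. The Moreau envelopes are then differentiable with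
gradient `σ • (x - prox x)` and satisfy a `σ`-quadratic upper bound, so exact gradient descent on
`φ` with `βγ ≤ 1/4` gives `∑ₜ ‖∇φ(x̄ᵗ)‖² ≤ 8 (φ(x⁰) - φ(x*)) / (7β)`. Taking `K = L = n`, the PerMFL
server iterates converge, for each fixed `t`, to the exact ones as `n → ∞`, and the strict gap up
to `4 (φ(x⁰) - φ(x*)) / β` absorbs the error for `n` large.
-/

open Filter Topology Function
open scoped RealInnerProductSpace NNReal

theorem le_pow_mul_add_div_of_le_mul_add {e : ℕ → ℝ} {s b : ℝ} (hs : 0 ≤ s) (hs1 : s < 1)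
    (hb : 0 ≤ b) (h : ∀ k, e (k + 1) ≤ s * e k + b) (k : ℕ) :
    e k ≤ s ^ k * e 0 + b / (1 - s) := by
  have h1s : 0 < 1 - s := sub_pos.2 hs1
  induction k with
  | zero => simpa using div_nonneg hb h1s.le
  | succ k ih =>
    calc e (k + 1) ≤ s * (s ^ k * e 0 + b / (1 - s)) + b := (h k).trans (by gcongr)
      _ = s ^ (k + 1) * e 0 + b / (1 - s) := by field_simp; ring

theorem tendsto_diag_of_le_mul_add {e : ℕ → ℕ → ℝ} {r b : ℕ → ℝ} {ρ c : ℝ}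
    (he : ∀ n k, 0 ≤ e n k) (hrec : ∀ n k, e n (k + 1) ≤ r n * e n k + b n)
    (hr : Tendsto r atTop (𝓝 ρ)) (hρ : ρ < 1) (hb0 : ∀ n, 0 ≤ b n)
    (hb : Tendsto b atTop (𝓝 0)) (he0 : Tendsto (fun n => e n 0) atTop (𝓝 c)) :
    Tendsto (fun n => e n n) atTop (𝓝 0) := by
  obtain ⟨s, hs, hs1⟩ := exists_between (max_lt hρ one_pos)
  have hs0 : 0 ≤ s := (le_max_right _ _).trans hs.le
  have hbound : ∀ᶠ n in atTop, e n n ≤ s ^ n * e n 0 + b n / (1 - s) := by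
    filter_upwards [hr.eventually_lt_const ((le_max_left _ _).trans_lt hs)] with n hn
    exact le_pow_mul_add_div_of_le_mul_add hs0 hs1 (hb0 n)
      (fun k => (hrec n k).trans (by gcongr; exact he n k)) n
  have hlim : Tendsto (fun n => s ^ n * e n 0 + b n / (1 - s)) atTop (𝓝 0) := by
    simpa using ((tendsto_pow_atTop_nhds_zero_of_lt_one hs0 hs1).mul he0).add
      (hb.div_const (1 - s))
  exact squeeze_zero' (Eventually.of_forall fun n => he n n) hbound hlim

section Lipschitz

variable {V : Type*} [NormedAddCommGroup V]

theorem LipschitzWith.const_add {α : Type*} [PseudoEMetricSpace α] {K : ℝ≥0} {B : α → V}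
    (hB : LipschitzWith K B) (c : V) : LipschitzWith K fun u => c + B u :=
  fun u v => by simpa only [edist_add_left] using hB u v

theorem LipschitzWith.inner_sub_le [InnerProductSpace ℝ V] {K : ℝ≥0} {B : V → V}
    (hB : LipschitzWith K B) (u v : V) : ⟪B u - B v, u - v⟫ ≤ K * ‖u - v‖ ^ 2 :=
  calc ⟪B u - B v, u - v⟫ ≤ ‖B u - B v‖ * ‖u - v‖ := real_inner_le_norm _ _
    _ ≤ K * ‖u - v‖ * ‖u - v‖ := by gcongr; exact hB.norm_sub_le u v
    _ = K * ‖u - v‖ ^ 2 := by ring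

variable [NormedSpace ℝ V]

theorem average_smul_sub {n : ℕ} (hn : n ≠ 0) (σ : ℝ) (x : V) (v : Fin n → V) :
    (1 / n : ℝ) • ∑ i, σ • (x - v i) = σ • x - (σ / n) • ∑ i, v i := by
  simp only [smul_sub, Finset.sum_sub_distrib, Finset.sum_const, Finset.card_univ,
    Fintype.card_fin, ← Nat.cast_smul_eq_nsmul ℝ, ← Finset.smul_sum]
  match_scalars <;> field_simp

theorem lipschitzWith_smul_sum {n : ℕ} (hn : n ≠ 0) {P : Fin n → V → V} {ℓ : ℝ≥0}
    (hP : ∀ i, LipschitzWith ℓ (P i)) {c : ℝ} (hc : 0 ≤ c) :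
    LipschitzWith (c * ℓ).toNNReal fun u => (c / n) • ∑ i, P i u := by
  refine LipschitzWith.of_dist_le' fun u v => ?_
  rw [dist_eq_norm, dist_eq_norm, ← smul_sub, ← Finset.sum_sub_distrib, norm_smul,
    Real.norm_of_nonneg (by positivity)]
  calc c / n * ‖∑ i, (P i u - P i v)‖ ≤ c / n * ∑ i : Fin n, ℓ * ‖u - v‖ := by
        gcongr
        exact (norm_sum_le _ _).trans (Finset.sum_le_sum fun i _ => (hP i).norm_sub_le u v)
    _ = c * ℓ * ‖u - v‖ := by
        simp only [Finset.sum_const, Finset.card_univ, Fintype.card_fin, nsmul_eq_mul]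
        field_simp

end Lipschitz

section RelaxedStep

variable {V : Type*} [NormedAddCommGroup V] [NormedSpace ℝ V]

/-- Both inner loops of PerMFL are relaxed steps: the device update is
`relaxedStep (fun u => λ • w - ∇f u) λ α`, and the team update with exact device solutions `p j`
is `relaxedStep (fun w => γ • x + (λ / N) • ∑ j, p j w) (λ + γ) η`. -/
def relaxedStep (A : V → V) (c s : ℝ) (u : V) : V := (1 - s * c) • u + s • A u

variable {A : V → V} {K : ℝ≥0} {c s : ℝ}

theorem relaxedStep_eq_self_iff (hs : s ≠ 0) {z : V} :
    relaxedStep A c s z = z ↔ A z = c • z := by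
  have h : relaxedStep A c s z - z = s • (A z - c • z) := by
    simp only [relaxedStep]
    module
  rw [← sub_eq_zero, h, smul_eq_zero, sub_eq_zero, or_iff_right hs]

theorem norm_relaxedStep_sub_le (hA : LipschitzWith K A) (hs : 0 ≤ s) (hsc : s * c ≤ 1)
    (u v : V) :
    ‖relaxedStep A c s u - relaxedStep A c s v‖ ≤ (1 - s * (c - K)) * ‖u - v‖ := by
  have h : relaxedStep A c s u - relaxedStep A c s v
      = (1 - s * c) • (u - v) + s • (A u - A v) := by
    simp only [relaxedStep]
    module
  calc ‖relaxedStep A c s u - relaxedStep A c s v‖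
      ≤ ‖(1 - s * c) • (u - v)‖ + ‖s • (A u - A v)‖ := h ▸ norm_add_le _ _
    _ ≤ (1 - s * c) * ‖u - v‖ + s * (K * ‖u - v‖) := by
      rw [norm_smul, norm_smul, Real.norm_of_nonneg (by linarith), Real.norm_of_nonneg hs]
      gcongr
      exact hA.norm_sub_le u v
    _ = (1 - s * (c - K)) * ‖u - v‖ := by ring

theorem exists_eq_smul_of_lipschitzWith [CompleteSpace V] (hA : LipschitzWith K A)
    (hK : K < c) : ∃ z, A z = c • z := by
  have hc : 0 < c := K.2.trans_lt hK
  have hcontr : ContractingWith (1 - c⁻¹ * (c - K)).toNNReal (relaxedStep A c c⁻¹) := by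
    refine ⟨Real.toNNReal_lt_one.2 ?_, LipschitzWith.of_dist_le' fun u v => ?_⟩
    · have : 0 < c⁻¹ * (c - K) := mul_pos (inv_pos.2 hc) (sub_pos.2 hK)
      linarith
    · simpa only [dist_eq_norm] using
        norm_relaxedStep_sub_le hA (inv_nonneg.2 hc.le) (inv_mul_cancel₀ hc.ne').le u v
  exact ⟨_, (relaxedStep_eq_self_iff (inv_ne_zero hc.ne')).1 hcontr.fixedPoint_isFixedPt⟩

theorem mul_norm_sub_le_of_eq_smul {A' : V → V} (hA : LipschitzWith K A) {z z' : V}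
    (hz : A z = c • z) (hz' : A' z' = c • z') :
    (c - K) * ‖z - z'‖ ≤ ‖A z' - A' z'‖ := by
  have h : c • (z - z') = (A z - A z') + (A z' - A' z') := by
    rw [smul_sub, ← hz, ← hz']
    abel
  have hc : c * ‖z - z'‖ ≤ K * ‖z - z'‖ + ‖A z' - A' z'‖ :=
    calc c * ‖z - z'‖ ≤ ‖c • (z - z')‖ := by
          rw [norm_smul]
          gcongr
          exact Real.le_norm_self c
      _ ≤ K * ‖z - z'‖ + ‖A z' - A' z'‖ :=
          h ▸ (norm_add_le _ _).trans (by gcongr; exact hA.norm_sub_le z z')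
  linarith

end RelaxedStep

section Gradient

variable {H : Type*} [NormedAddCommGroup H] [InnerProductSpace ℝ H] [CompleteSpace H]

theorem HasGradientAt.add {F G : H → ℝ} {g g' x : H} (hF : HasGradientAt F g x)
    (hG : HasGradientAt G g' x) : HasGradientAt (fun y => F y + G y) (g + g') x := by
  rw [hasGradientAt_iff_hasFDerivAt] at *
  simpa [map_add] using hF.fun_add hG

theorem HasGradientAt.const_mul {F : H → ℝ} {g x : H} (c : ℝ) (hF : HasGradientAt F g x) :
    HasGradientAt (fun y => c * F y) (c • g) x := by
  rw [hasGradientAt_iff_hasFDerivAt] at *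
  simpa [map_smul] using hF.const_mul c

theorem HasGradientAt.fun_sum {ι : Type*} {s : Finset ι} {F : ι → H → ℝ} {g : ι → H} {x : H}
    (h : ∀ i ∈ s, HasGradientAt (F i) (g i) x) :
    HasGradientAt (fun y => ∑ i ∈ s, F i y) (∑ i ∈ s, g i) x := by
  rw [hasGradientAt_iff_hasFDerivAt]
  simpa [map_sum] using HasFDerivAt.fun_sum fun i hi => (h i hi).hasFDerivAt

theorem hasGradientAt_norm_sub_sq (w x : H) :
    HasGradientAt (fun y => ‖y - w‖ ^ 2) ((2 : ℝ) • (x - w)) x := by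
  rw [hasGradientAt_iff_hasFDerivAt]
  refine ((hasFDerivAt_id x).sub_const w).norm_sq.congr_fderiv ?_
  ext v
  simp

theorem hasGradientAt_of_abs_sub_inner_le {F : H → ℝ} {g x : H} (C : ℝ)
    (h : ∀ y, |F y - F x - ⟪g, y - x⟫| ≤ C * ‖y - x‖ ^ 2) : HasGradientAt F g x := by
  rw [hasGradientAt_iff_isLittleO]
  have hsq : (fun y => ‖y - x‖ ^ 2) =o[𝓝 x] fun y => y - x :=
    (Asymptotics.isLittleO_norm_pow_id one_lt_two).comp_tendsto
      (tendsto_sub_nhds_zero_iff.2 tendsto_id)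
  refine (Asymptotics.IsBigO.of_bound C (Eventually.of_forall fun y => ?_)).trans_isLittleO hsq
  simpa using h y

theorem isMinOn_univ_of_inner_gradient_nonneg {h : H → ℝ} {G : H → H} {z : H}
    (hG : ∀ u, HasGradientAt h (G u) u) (hGz : ∀ u, 0 ≤ ⟪G u, u - z⟫) :
    IsMinOn h Set.univ z := by
  intro u _
  set v := u - z
  have hderiv : ∀ t : ℝ, HasDerivAt (fun t : ℝ => h (z + t • v)) ⟪G (z + t • v), v⟫ t := by
    intro t
    have hline : HasDerivAt (fun t : ℝ => z + t • v) v t := by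
      simpa using ((hasDerivAt_id t).smul_const v).const_add z
    simpa [Function.comp_def] using (hG (z + t • v)).hasFDerivAt.comp_hasDerivAt t hline
  have hmono : MonotoneOn (fun t : ℝ => h (z + t • v)) (Set.Ici 0) := by
    refine monotoneOn_of_hasDerivWithinAt_nonneg (convex_Ici 0)
      (fun t _ => (hderiv t).continuousAt.continuousWithinAt)
      (fun t _ => (hderiv t).hasDerivWithinAt) fun t ht => ?_
    rw [interior_Ici] at ht
    have := hGz (z + t • v)
    rw [add_sub_cancel_left, real_inner_smul_right] at this
    exact nonneg_of_mul_nonneg_right (by linarith) ht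
  simpa [v] using hmono Set.self_mem_Ici (Set.mem_Ici.2 zero_le_one) zero_le_one

end Gradient

section GradientDescent

variable {H : Type*} [NormedAddCommGroup H] [InnerProductSpace ℝ H]

theorem sum_norm_sq_le_of_gradient_descent {φ : H → ℝ} {G : H → H} {Lφ β : ℝ}
    (hφ : ∀ x y, φ y ≤ φ x + ⟪G x, y - x⟫ + Lφ / 2 * ‖y - x‖ ^ 2) {x : ℕ → H}
    (hx : ∀ t, x (t + 1) = x t - β • G (x t)) (T : ℕ) :
    β * (1 - Lφ * β / 2) * ∑ t ∈ Finset.range T, ‖G (x t)‖ ^ 2 ≤ φ (x 0) - φ (x T) := by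
  induction T with
  | zero => simp
  | succ T ih =>
    have hstep := hφ (x T) (x (T + 1))
    rw [hx, sub_sub_cancel_left, inner_neg_right, real_inner_smul_right,
      real_inner_self_eq_norm_sq, norm_neg, norm_smul, mul_pow, Real.norm_eq_abs, sq_abs] at hstep
    rw [Finset.sum_range_succ, hx]
    linarith

theorem sum_norm_sq_lt_of_gradient_descent {φ : H → ℝ} {G : H → H} {Lφ β : ℝ}
    (hφ : ∀ x y, φ y ≤ φ x + ⟪G x, y - x⟫ + Lφ / 2 * ‖y - x‖ ^ 2) (hβ : 0 < β)
    (hβL : β * Lφ ≤ 1 / 4) {x : ℕ → H} (hx : ∀ t, x (t + 1) = x t - β • G (x t)) {xstar : H}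
    (hxstar : IsMinOn φ Set.univ xstar) (hx0 : φ xstar < φ (x 0)) (T : ℕ) :
    ∑ t ∈ Finset.range T, ‖G (x t)‖ ^ 2 < 4 * (φ (x 0) - φ xstar) / β := by
  have hdescent := sum_norm_sq_le_of_gradient_descent hφ hx T
  have hmin : φ xstar ≤ φ (x T) := hxstar (Set.mem_univ _)
  have hS := Finset.sum_nonneg fun t (_ : t ∈ Finset.range T) => sq_nonneg ‖G (x t)‖
  rw [lt_div_iff₀ hβ]
  nlinarith [mul_nonneg hβ.le hS]

end GradientDescent

section Prox

variable {H : Type*} [NormedAddCommGroup H]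

def IsProxMap (g : H → ℝ) (σ : ℝ) (P : H → H) : Prop :=
  ∀ x, IsMinOn (fun u => g u + σ / 2 * ‖u - x‖ ^ 2) Set.univ (P x)

namespace IsProxMap

variable {g : H → ℝ} {σ : ℝ} {P : H → H}

theorem moreauEnv_eq (hP : IsProxMap g σ P) (x : H) :
    moreauEnv g σ x = g (P x) + σ / 2 * ‖P x - x‖ ^ 2 :=
  le_antisymm
    (ciInf_le ⟨_, by rintro _ ⟨u, rfl⟩; exact hP x (Set.mem_univ u)⟩ (P x))
    (le_ciInf fun u => hP x (Set.mem_univ u))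

variable [InnerProductSpace ℝ H]

theorem moreauEnv_le (hP : IsProxMap g σ P) (x y : H) :
    moreauEnv g σ y ≤ moreauEnv g σ x + ⟪σ • (x - P x), y - x⟫ + σ / 2 * ‖y - x‖ ^ 2 := by
  have hmin : g (P y) + σ / 2 * ‖P y - y‖ ^ 2 ≤ g (P x) + σ / 2 * ‖P x - y‖ ^ 2 :=
    hP y (Set.mem_univ (P x))
  have hexpand : ‖P x - y‖ ^ 2 = ‖P x - x‖ ^ 2 + 2 * ⟪x - P x, y - x⟫ + ‖y - x‖ ^ 2 := by
    rw [show P x - y = -((x - P x) + (y - x)) by abel, norm_neg, norm_add_sq_real,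
      norm_sub_rev]
  rw [hP.moreauEnv_eq, hP.moreauEnv_eq, real_inner_smul_left]
  linear_combination hmin + σ / 2 * hexpand

variable [CompleteSpace H]

/-- The upper bound is `moreauEnv_le`; the matching lower bound comes from `moreauEnv_le` with
`x` and `y` exchanged, at the cost of the Lipschitz constant of `P`. -/
theorem hasGradientAt_moreauEnv (hP : IsProxMap g σ P) (hσ : 0 ≤ σ) {ℓ : ℝ≥0}
    (hPl : LipschitzWith ℓ P) (x : H) :
    HasGradientAt (moreauEnv g σ) (σ • (x - P x)) x := by
  refine hasGradientAt_of_abs_sub_inner_le (σ * (ℓ + 1 / 2)) fun y => abs_le.2 ⟨?_, ?_⟩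
  · have hback := hP.moreauEnv_le y x
    have hinner : ⟪σ • (y - P y), x - y⟫ + ⟪σ • (x - P x), y - x⟫
        = σ * ⟪P y - P x, y - x⟫ - σ * ‖y - x‖ ^ 2 := by
      rw [show x - y = -(y - x) by abel, show y - P y = (y - x) + (x - P x) - (P y - P x) by abel,
        inner_neg_right, real_inner_smul_left, real_inner_smul_left, inner_sub_left,
        inner_add_left, real_inner_self_eq_norm_sq]
      ring
    rw [norm_sub_rev x y] at hback
    nlinarith [mul_le_mul_of_nonneg_left (hPl.inner_sub_le y x) hσ]
  · have := hP.moreauEnv_le x y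
    nlinarith [mul_nonneg (mul_nonneg hσ ℓ.coe_nonneg) (sq_nonneg ‖y - x‖)]

end IsProxMap

variable [InnerProductSpace ℝ H]

theorem average_moreauEnv_le {n : ℕ} (hn : n ≠ 0) {g : Fin n → H → ℝ} {σ : ℝ}
    {P : Fin n → H → H} (hP : ∀ i, IsProxMap (g i) σ (P i)) (x y : H) :
    1 / (n : ℝ) * ∑ i, moreauEnv (g i) σ y ≤ 1 / (n : ℝ) * ∑ i, moreauEnv (g i) σ x
      + ⟪σ • x - (σ / n) • ∑ i, P i x, y - x⟫ + σ / 2 * ‖y - x‖ ^ 2 := by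
  have hsum := Finset.sum_le_sum fun i (_ : i ∈ Finset.univ) => (hP i).moreauEnv_le x y
  rw [Finset.sum_add_distrib, Finset.sum_add_distrib, Finset.sum_const, Finset.card_univ,
    Fintype.card_fin, nsmul_eq_mul, ← sum_inner] at hsum
  rw [← average_smul_sub hn, real_inner_smul_left]
  have := mul_le_mul_of_nonneg_left hsum (one_div_nonneg.2 (Nat.cast_nonneg n))
  field_simp at this ⊢
  linarith

variable [CompleteSpace H]

/-- The gradient `(a + σ) • u - (σ • x + B u)` of `g + σ/2 ‖· - x‖²` is strongly monotone, and its
zero is the fixed point of the contraction `u ↦ (a + σ)⁻¹ • (σ • x + B u)`. -/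
theorem exists_isProxMap {g : H → ℝ} {a σ : ℝ} {B : H → H} {K : ℝ≥0}
    (hg : ∀ u, HasGradientAt g (a • u - B u) u) (hB : LipschitzWith K B) (hσ : 0 ≤ σ)
    (hK : K < a + σ) :
    ∃ P : H → H, IsProxMap g σ P ∧ LipschitzWith (σ / (a + σ - K)).toNNReal P ∧
      ∀ x, σ • x + B (P x) = (a + σ) • P x := by
  choose P hP using fun x => exists_eq_smul_of_lipschitzWith (hB.const_add (σ • x)) hK
  refine ⟨P, fun x => ?_, LipschitzWith.of_dist_le' fun x y => ?_, hP⟩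
  · refine isMinOn_univ_of_inner_gradient_nonneg
      (G := fun u => (a + σ) • (u - P x) - (B u - B (P x))) (fun u => ?_) fun u => ?_
    · convert (hg u).add ((hasGradientAt_norm_sub_sq x u).const_mul (σ / 2)) using 1
      rw [smul_sub, ← hP x]
      module
    · rw [inner_sub_left, real_inner_smul_left, real_inner_self_eq_norm_sq]
      nlinarith [hB.inner_sub_le u (P x), sq_nonneg ‖u - P x‖]
  · have h := mul_norm_sub_le_of_eq_smul (hB.const_add (σ • x))
      (A' := fun u => σ • y + B u) (hP x) (hP y)
    rw [add_sub_add_right_eq_sub, ← smul_sub, norm_smul, Real.norm_of_nonneg hσ] at h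
    rw [dist_eq_norm, dist_eq_norm, div_mul_eq_mul_div, le_div_iff₀ (sub_pos.2 hK)]
    linarith

theorem exists_isProxMap_of_lipschitzWith_gradient {f : H → ℝ} {K : ℝ≥0} {lam : ℝ}
    (hf : Differentiable ℝ f) (hK : LipschitzWith K (gradient f)) (hlam : K < lam) :
    ∃ P : H → H, IsProxMap f lam P ∧ LipschitzWith (lam / (lam - K)).toNNReal P ∧
      ∀ w, gradient f (P w) = lam • (w - P w) := by
  obtain ⟨P, hprox, hlip, hfix⟩ := exists_isProxMap (a := 0) (B := -gradient f)
    (fun u => by simpa using (hf u).hasGradientAt) hK.neg (by linarith [K.coe_nonneg])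
    (by rwa [zero_add])
  refine ⟨P, hprox, by rwa [zero_add] at hlip, fun w => ?_⟩
  have := hfix w
  simp only [Pi.neg_apply, zero_add] at this
  rw [smul_sub, ← this]
  abel

theorem hasGradientAt_average_moreauEnv {n : ℕ} (hn : n ≠ 0) {g : Fin n → H → ℝ} {σ : ℝ}
    (hσ : 0 ≤ σ) {P : Fin n → H → H} {ℓ : Fin n → ℝ≥0} (hP : ∀ i, IsProxMap (g i) σ (P i))
    (hPl : ∀ i, LipschitzWith (ℓ i) (P i)) (x : H) :
    HasGradientAt (fun y => 1 / (n : ℝ) * ∑ i, moreauEnv (g i) σ y)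
      (σ • x - (σ / n) • ∑ i, P i x) x := by
  rw [← average_smul_sub hn]
  exact (HasGradientAt.fun_sum fun i _ =>
    (hP i).hasGradientAt_moreauEnv hσ (hPl i) x).const_mul _

theorem exists_isProxMap_average_moreauEnv {n : ℕ} (hn : n ≠ 0) {g : Fin n → H → ℝ}
    {P : Fin n → H → H} {ℓ : ℝ≥0} {lam gam : ℝ} (hlam : 0 ≤ lam) (hgam : 0 ≤ gam)
    (hP : ∀ i, IsProxMap (g i) lam (P i)) (hPl : ∀ i, LipschitzWith ℓ (P i))
    (hℓ : lam * ℓ < lam + gam) :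
    ∃ W : H → H, IsProxMap (fun w => 1 / (n : ℝ) * ∑ i, moreauEnv (g i) lam w) gam W ∧
      LipschitzWith (gam / (lam + gam - lam * ℓ)).toNNReal W ∧
      ∀ x, gam • x + (lam / n) • ∑ i, P i (W x) = (lam + gam) • W x := by
  have hK : ((lam * ℓ).toNNReal : ℝ) = lam * ℓ := Real.coe_toNNReal _ (by positivity)
  have := exists_isProxMap (fun w => hasGradientAt_average_moreauEnv hn hlam hP hPl w)
    (lipschitzWith_smul_sum hn hPl hlam) hgam (by rwa [hK])
  rwa [hK] at this

end Prox

theorem norm_clientSeq_sub_le {g : E → ℝ} {K : ℝ≥0} (hK : LipschitzWith K (gradient g))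
    {α lam : ℝ} (hα : 0 < α) (hαlam : α * lam ≤ 1) {w z : E}
    (hz : gradient g z = lam • (w - z)) (l : ℕ) :
    ‖clientSeq g α lam w l - z‖ ≤ (1 - α * (lam - K)) ^ l * ‖w - z‖ := by
  set A : E → E := fun u => lam • w + (-gradient g) u
  have hAz : A z = lam • z := by
    simp only [A, Pi.neg_apply, hz, smul_sub]
    abel
  have hrate : 0 ≤ 1 - α * (lam - K) := by nlinarith [K.coe_nonneg]
  induction l with
  | zero => simp [clientSeq]
  | succ l ih =>
    have hstep : clientSeq g α lam w (l + 1) = relaxedStep A lam α (clientSeq g α lam w l) := by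
      simp only [clientSeq, relaxedStep, A, Pi.neg_apply]
      module
    calc ‖clientSeq g α lam w (l + 1) - z‖
        = ‖relaxedStep A lam α (clientSeq g α lam w l) - relaxedStep A lam α z‖ := by
          rw [hstep, (relaxedStep_eq_self_iff hα.ne').2 hAz]
      _ ≤ (1 - α * (lam - K)) * ‖clientSeq g α lam w l - z‖ :=
          norm_relaxedStep_sub_le (hK.neg.const_add _) hα.le hαlam _ _
      _ ≤ (1 - α * (lam - K)) ^ (l + 1) * ‖w - z‖ := by
          rw [pow_succ', mul_assoc]
          gcongr

theorem norm_clientSeq_sub_le_of_lipschitzWith {g : E → ℝ} {K ℓ : ℝ≥0}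
    (hK : LipschitzWith K (gradient g)) {α lam : ℝ} (hα : 0 < α) (hαlam : α * lam ≤ 1)
    {p : E → E} (hp_fix : ∀ w, gradient g (p w) = lam • (w - p w)) (hpl : LipschitzWith ℓ p)
    (w z : E) (l : ℕ) :
    ‖clientSeq g α lam w l - p w‖
      ≤ (1 - α * (lam - K)) ^ l * ((1 + ℓ) * ‖w - z‖ + ‖z - p z‖) := by
  have hrate : 0 ≤ 1 - α * (lam - K) := by nlinarith [K.coe_nonneg]
  refine (norm_clientSeq_sub_le hK hα hαlam (hp_fix w) l).trans ?_
  gcongr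
  calc ‖w - p w‖ = ‖(w - z) + (z - p z) + (p z - p w)‖ := by congr 1; abel
    _ ≤ ‖w - z‖ + ‖z - p z‖ + ‖p z - p w‖ := norm_add₃_le
    _ ≤ ‖w - z‖ + ‖z - p z‖ + ℓ * ‖z - w‖ := by gcongr; exact hpl.norm_sub_le z w
    _ = (1 + ℓ) * ‖w - z‖ + ‖z - p z‖ := by rw [norm_sub_rev z w]; ring

section Team

variable {N : ℕ} {f : Fin N → E → ℝ} {α : Fin N → ℝ} {p : Fin N → E → E} {W : E → E}
  {K ℓ : ℝ≥0} {lam gam η : ℝ}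

theorem teamSeq_succ (p : Fin N → E → E) (L k : ℕ) (x : E) :
    teamSeq f α lam gam η L x (k + 1)
      = relaxedStep (fun w => gam • x + (lam / N) • ∑ j, p j w) (lam + gam) η
          (teamSeq f α lam gam η L x k)
        + (lam * η / N) • ∑ j, (clientSeq (f j) (α j) lam (teamSeq f α lam gam η L x k) L
            - p j (teamSeq f α lam gam η L x k)) := by
  simp only [teamSeq, relaxedStep, Finset.sum_sub_distrib]
  module

variable (hN : N ≠ 0) (hK : ∀ j, LipschitzWith K (gradient (f j))) (hKlam : K < lam)
  (hα : ∀ j, 0 < α j ∧ α j * lam ≤ 1) (hp_fix : ∀ j w, gradient (f j) (p j w) = lam • (w - p j w))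
  (hpl : ∀ j, LipschitzWith ℓ (p j)) (hη : 0 < η) (hηc : η * (lam + gam) ≤ 1)
  (hW : ∀ x, gam • x + (lam / N) • ∑ j, p j (W x) = (lam + gam) • W x)
include hN hK hKlam hα hp_fix hpl hη hηc hW

theorem norm_teamSeq_succ_sub_le (L k : ℕ) (x : E) :
    ‖teamSeq f α lam gam η L x (k + 1) - W x‖
      ≤ (1 - η * (lam + gam - lam * ℓ) + lam * η / N * ∑ j, (1 + ℓ) * (1 - α j * (lam - K)) ^ L)
          * ‖teamSeq f α lam gam η L x k - W x‖
        + lam * η / N * ∑ j, (1 - α j * (lam - K)) ^ L * ‖W x - p j (W x)‖ := by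
  have hlam : 0 ≤ lam := K.coe_nonneg.trans hKlam.le
  set w := teamSeq f α lam gam η L x k
  set z := W x
  have hrelax : ‖relaxedStep (fun w => gam • x + (lam / N) • ∑ j, p j w) (lam + gam) η w - z‖
      ≤ (1 - η * (lam + gam - lam * ℓ)) * ‖w - z‖ := by
    have hz : relaxedStep (fun w => gam • x + (lam / N) • ∑ j, p j w) (lam + gam) η z = z :=
      (relaxedStep_eq_self_iff hη.ne').2 (hW x)
    conv_lhs => rw [← hz]
    simpa [Real.coe_toNNReal _ (mul_nonneg hlam ℓ.coe_nonneg)] using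
      norm_relaxedStep_sub_le ((lipschitzWith_smul_sum hN hpl hlam).const_add _) hη.le hηc w z
  have herror : ‖(lam * η / N) • ∑ j, (clientSeq (f j) (α j) lam w L - p j w)‖
      ≤ lam * η / N * ∑ j, (1 - α j * (lam - K)) ^ L * ((1 + ℓ) * ‖w - z‖ + ‖z - p j z‖) := by
    rw [norm_smul, Real.norm_of_nonneg (by positivity)]
    gcongr
    exact (norm_sum_le _ _).trans (Finset.sum_le_sum fun j _ =>
      norm_clientSeq_sub_le_of_lipschitzWith (hK j) (hα j).1 (hα j).2 (hp_fix j) (hpl j) w z L)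
  have hsplit : ∑ j, (1 - α j * (lam - K)) ^ L * ((1 + ℓ) * ‖w - z‖ + ‖z - p j z‖)
      = (∑ j, (1 + ℓ) * (1 - α j * (lam - K)) ^ L) * ‖w - z‖
        + ∑ j, (1 - α j * (lam - K)) ^ L * ‖z - p j z‖ := by
    rw [Finset.sum_mul, ← Finset.sum_add_distrib]
    exact Finset.sum_congr rfl fun j _ => by ring
  rw [teamSeq_succ p, add_sub_right_comm]
  refine (norm_add_le _ _).trans ((add_le_add hrelax herror).trans_eq ?_)
  rw [hsplit]
  ring

theorem tendsto_teamSeq (hWc : Continuous W) (hℓ : lam * ℓ < lam + gam) {x : E} {xs : ℕ → E}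
    (hxs : Tendsto xs atTop (𝓝 x)) :
    Tendsto (fun n => teamSeq f α lam gam η n (xs n) n) atTop (𝓝 (W x)) := by
  have hlam : 0 ≤ lam := K.coe_nonneg.trans hKlam.le
  have hrate : ∀ j, 0 ≤ 1 - α j * (lam - K) := fun j => by nlinarith [K.coe_nonneg, hα j]
  have hpow : ∀ j, Tendsto (fun n => (1 - α j * (lam - K)) ^ n) atTop (𝓝 0) := fun j =>
    tendsto_pow_atTop_nhds_zero_of_lt_one (hrate j) (by nlinarith [hα j])
  have hWxs : Tendsto (fun n => W (xs n)) atTop (𝓝 (W x)) := (hWc.tendsto x).comp hxs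
  have hdiag := tendsto_diag_of_le_mul_add
    (e := fun n k => ‖teamSeq f α lam gam η n (xs n) k - W (xs n)‖) (fun _ _ => norm_nonneg _)
    (fun n k => norm_teamSeq_succ_sub_le hN hK hKlam hα hp_fix hpl hη hηc hW n k (xs n))
    (by simpa using tendsto_const_nhds.add (tendsto_const_nhds.mul
      (tendsto_finsetSum _ fun j _ => (hpow j).const_mul (1 + (ℓ : ℝ)))))
    (by nlinarith)
    (fun n => mul_nonneg (by positivity) (Finset.sum_nonneg fun j _ =>
      mul_nonneg (pow_nonneg (hrate j) n) (norm_nonneg _)))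
    (by simpa using tendsto_const_nhds.mul (tendsto_finsetSum _ fun j _ => (hpow j).mul
      ((hWxs.sub (((hpl j).continuous.tendsto _).comp hWxs)).norm)))
    (hxs.sub hWxs).norm
  simpa using (tendsto_zero_iff_norm_tendsto_zero.2 hdiag).add hWxs

end Team

theorem exists_isProxMap_tendsto_teamSeq {N : ℕ} (hN : N ≠ 0) {f : Fin N → E → ℝ}
    {α : Fin N → ℝ} {K : ℝ≥0} {lam gam η : ℝ} (hf : ∀ j, Differentiable ℝ (f j))
    (hK : ∀ j, LipschitzWith K (gradient (f j))) (hKlam : 2 * K < lam) (hlam : lam < gam)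
    (hα : ∀ j, 0 < α j ∧ α j * lam ≤ 1) (hη : 0 < η) (hηc : η * (lam + gam) ≤ 1) :
    ∃ (W : E → E) (ℓ : ℝ≥0),
      IsProxMap (fun w => 1 / (N : ℝ) * ∑ j, moreauEnv (f j) lam w) gam W ∧
      LipschitzWith ℓ W ∧ ∀ x (xs : ℕ → E), Tendsto xs atTop (𝓝 x) →
        Tendsto (fun n => teamSeq f α lam gam η n (xs n) n) atTop (𝓝 (W x)) := by
  have hK0 := K.coe_nonneg
  have hKlam' : (K : ℝ) < lam := by linarith
  choose p hp hpl hp_fix using fun j =>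
    exists_isProxMap_of_lipschitzWith_gradient (hf j) (hK j) hKlam'
  have hℓ : lam * (lam / (lam - K)).toNNReal < lam + gam := by
    rw [Real.coe_toNNReal _ (div_nonneg (by linarith) (by linarith)), mul_div_assoc',
      div_lt_iff₀ (by linarith)]
    nlinarith
  obtain ⟨W, hW, hWl, hW_fix⟩ :=
    exists_isProxMap_average_moreauEnv hN (by linarith) (by linarith) hp hpl hℓ
  exact ⟨W, _, hW, hWl, fun x xs hxs =>
    tendsto_teamSeq hN hK hKlam' hα hp_fix hpl hη hηc hW_fix hWl.continuous hℓ hxs⟩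

theorem tendsto_serverSeq {M : ℕ} {N : Fin M → ℕ} {f : (i : Fin M) → Fin (N i) → E → ℝ}
    {α : (i : Fin M) → Fin (N i) → ℝ} {η : Fin M → ℝ} {lam gam β : ℝ} {W : Fin M → E → E}
    (hW : ∀ i x (xs : ℕ → E), Tendsto xs atTop (𝓝 x) →
      Tendsto (fun n => teamSeq (f i) (α i) lam gam (η i) n (xs n) n) atTop (𝓝 (W i x)))
    (x0 : E) (t : ℕ) :
    Tendsto (fun n => serverSeq f α η lam gam β n n x0 t) atTop
      (𝓝 ((fun x => (1 - β * gam) • x + (β * gam / M) • ∑ i, W i x)^[t] x0)) := by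
  induction t with
  | zero => exact tendsto_const_nhds
  | succ t ih =>
    rw [iterate_succ_apply']
    exact (ih.const_smul _).add ((tendsto_finsetSum _ fun i _ => hW i _ _ ih).const_smul _)

theorem exists_sum_norm_sq_gradient_serverSeq_lt {M : ℕ} (hM : M ≠ 0) {N : Fin M → ℕ}
    {f : (i : Fin M) → Fin (N i) → E → ℝ} {α : (i : Fin M) → Fin (N i) → ℝ} {η : Fin M → ℝ}
    {lam gam β : ℝ} (hgam : 0 ≤ gam) (hβ : 0 < β) (hβgam : β * gam ≤ 1 / 4)
    {F : Fin M → E → ℝ} {W : Fin M → E → E} {ℓ : Fin M → ℝ≥0}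
    (hW : ∀ i, IsProxMap (F i) gam (W i)) (hWl : ∀ i, LipschitzWith (ℓ i) (W i))
    (hW_lim : ∀ i x (xs : ℕ → E), Tendsto xs atTop (𝓝 x) →
      Tendsto (fun n => teamSeq (f i) (α i) lam gam (η i) n (xs n) n) atTop (𝓝 (W i x)))
    {φ : E → ℝ} (hφ : ∀ x, φ x = 1 / (M : ℝ) * ∑ i, moreauEnv (F i) gam x) {xstar x0 : E}
    (hxstar : IsMinOn φ Set.univ xstar) (hx0 : φ xstar < φ x0) (T : ℕ) :
    ∃ n, ∑ t ∈ Finset.range T, ‖gradient φ (serverSeq f α η lam gam β n n x0 t)‖ ^ 2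
      < 4 * (φ x0 - φ xstar) / β := by
  set G : E → E := fun x => gam • x - (gam / M) • ∑ i, W i x
  have hgrad : gradient φ = G := gradient_eq fun x => by
    rw [funext hφ]
    exact hasGradientAt_average_moreauEnv hM hgam hW hWl x
  have hGc : Continuous G := (continuous_id.const_smul gam).sub
    ((continuous_finsetSum _ fun i _ => (hWl i).continuous).const_smul _)
  have hstep : (fun x => (1 - β * gam) • x + (β * gam / M) • ∑ i, W i x) = fun x => x - β • G x := by
    funext x
    module
  have hsum := sum_norm_sq_lt_of_gradient_descent (φ := φ)
    (fun x y => by simpa only [hφ] using average_moreauEnv_le hM hW x y) hβ hβgam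
    (x := fun t => (fun x => x - β • G x)^[t] x0) (fun t => iterate_succ_apply' _ _ _) hxstar hx0 T
  have hconv := fun t => tendsto_serverSeq (β := β) hW_lim x0 t
  rw [hstep] at hconv
  rw [hgrad]
  exact ((tendsto_finsetSum _ fun t _ =>
    ((hGc.tendsto _).comp (hconv t)).norm.pow 2).eventually_lt_const hsum).exists

theorem permfl_main_nonconvex_general
    {M : ℕ} (hM : 1 ≤ M) {N : Fin M → ℕ} (hN : ∀ i, 1 ≤ N i)
    (f : (i : Fin M) → Fin (N i) → E → ℝ)
    (Lf lam gam : ℝ) (hLf : 0 ≤ Lf)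
    (hdiff : ∀ i j, Differentiable ℝ (f i j))
    (hlip : ∀ i j, ∀ x y : E,
      ‖gradient (f i j) x - gradient (f i j) y‖ ≤ Lf * ‖x - y‖)
    (h1 : 4 * Lf < 2 * lam) (h2 : 2 * lam < gam)
    (α : (i : Fin M) → Fin (N i) → ℝ)
    (hα : ∀ i j, 0 < α i j ∧ α i j ≤ 1 / lam)
    (η : Fin M → ℝ) (hη : ∀ i, 0 < η i ∧ η i ≤ 1 / (lam + gam))
    (β : ℝ) (hβ0 : 0 < β) (hβ : β ≤ 1 / (4 * gam))
    (φ : E → ℝ)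
    (hφ : ∀ x : E,
      φ x = (1 / (M : ℝ)) * ∑ i : Fin M,
        moreauEnv
          (fun w : E => (1 / (N i : ℝ)) * ∑ j : Fin (N i), moreauEnv (f i j) lam w)
          gam x)
    (xstar : E) (hxstar : IsMinOn φ Set.univ xstar)
    (x0 : E) (hx0 : φ xstar < φ x0)
    (T : ℕ) :
    ∃ K L : ℕ,
      (1 / (T : ℝ)) *
          ∑ t ∈ Finset.range T, ‖gradient φ (serverSeq f α η lam gam β K L x0 t)‖ ^ 2
        ≤ 4 * (φ x0 - φ xstar) / (β * T) := by
  have hlam : 0 < lam := by linarith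
  have hK : ∀ i j, LipschitzWith Lf.toNNReal (gradient (f i j)) := fun i j =>
    LipschitzWith.of_dist_le' fun x y => by simpa only [dist_eq_norm] using hlip i j x y
  choose W ℓ hW hWl hW_lim using fun i =>
    exists_isProxMap_tendsto_teamSeq (Nat.one_le_iff_ne_zero.1 (hN i)) (hdiff i) (hK i)
      (by rw [Real.coe_toNNReal _ hLf]; linarith) (by linarith)
      (fun j => ⟨(hα i j).1, (le_div_iff₀ hlam).1 (hα i j).2⟩) (hη i).1
      ((le_div_iff₀ (by linarith)).1 (hη i).2)
  have hβgam : β * gam ≤ 1 / 4 := by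
    rw [le_div_iff₀ (by linarith)] at hβ
    linarith
  obtain ⟨n, hn⟩ := exists_sum_norm_sq_gradient_serverSeq_lt (Nat.one_le_iff_ne_zero.1 hM)
    (by linarith) hβ0 hβgam hW hWl hW_lim hφ hxstar hx0 T
  refine ⟨n, n, ?_⟩
  calc 1 / (T : ℝ) * ∑ t ∈ Finset.range T, ‖gradient φ (serverSeq f α η lam gam β n n x0 t)‖ ^ 2
      ≤ 1 / T * (4 * (φ x0 - φ xstar) / β) := by gcongr
    _ = 4 * (φ x0 - φ xstar) / (β * T) := by ring

/-- **Main theorem of PerMFL, non-convex case.**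
If every device loss `f i j` is differentiable with `L_f`-Lipschitz gradient (not
necessarily convex), `γ > 2λ > 4L_f ≥ 0` (so the server objective `φ` is
differentiable with `γ`-Lipschitz gradient), and the step sizes satisfy
`0 < α_{ij} ≤ 1/λ`, `0 < η_i ≤ 1/(λ+γ)`, `0 < β ≤ 1/(4γ)`, then for a global
minimizer `x*` of `φ` with `φ(x⁰) > φ(x*)` and every `T ≥ 1` there exist inner
iteration counts `K, L` such that the PerMFL iterates satisfy
`(1/T)∑_{t<T}‖∇φ(xᵗ)‖² ≤ 4(φ(x⁰) − φ(x*))/(βT)`; equivalently, a point `x^{t̃}`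
chosen uniformly at random from `{x⁰, …, x^{T−1}}` satisfies
`E‖∇φ(x^{t̃})‖² ≤ 4(φ(x⁰) − φ(x*))/(βT)`. -/
theorem permfl_main_nonconvex
    {M : ℕ} (hM : 1 ≤ M) {N : Fin M → ℕ} (hN : ∀ i, 1 ≤ N i)
    (f : (i : Fin M) → Fin (N i) → E → ℝ)
    (Lf lam gam : ℝ) (hLf : 0 ≤ Lf)
    (hdiff : ∀ i j, Differentiable ℝ (f i j))
    (hlip : ∀ i j, ∀ x y : E,
      ‖gradient (f i j) x - gradient (f i j) y‖ ≤ Lf * ‖x - y‖)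
    (h1 : 4 * Lf < 2 * lam) (h2 : 2 * lam < gam)
    (α : (i : Fin M) → Fin (N i) → ℝ)
    (hα : ∀ i j, 0 < α i j ∧ α i j ≤ 1 / lam)
    (η : Fin M → ℝ) (hη : ∀ i, 0 < η i ∧ η i ≤ 1 / (lam + gam))
    (β : ℝ) (hβ0 : 0 < β) (hβ : β ≤ 1 / (4 * gam))
    (φ : E → ℝ)
    (hφ : ∀ x : E,
      φ x = (1 / (M : ℝ)) * ∑ i : Fin M,
        moreauEnv
          (fun w : E => (1 / (N i : ℝ)) * ∑ j : Fin (N i), moreauEnv (f i j) lam w)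
          gam x)
    (xstar : E) (hxstar : IsMinOn φ Set.univ xstar)
    (x0 : E) (hx0 : φ xstar < φ x0)
    (T : ℕ) (hT : 1 ≤ T) :
    ∃ K L : ℕ,
      (1 / (T : ℝ)) *
          ∑ t ∈ Finset.range T, ‖gradient φ (serverSeq f α η lam gam β K L x0 t)‖ ^ 2
        ≤ 4 * (φ x0 - φ xstar) / (β * T) :=
  permfl_main_nonconvex_general hM hN f Lf lam gam hLf hdiff hlip h1 h2 α hα η hη β hβ0 hβ φ hφ
    xstar hxstar x0 hx0 T

end
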